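/- arXiv:2006.15606 — 6 statements merged into one kernel-verified Lean document; each statement's English description precedes it below -/
import Mathlib

section
/- Let Ω ⊆ ℝ⁵ be open, let G, H : Ω → ℝ be smooth, and let z : U → ℝ be a smooth solution of the PDE system z_y = G(x,y,z,z_x,z_xx), z_xxx = H(x,y,z,z_x,z_xx) on an open set U ⊆ ℝ² whose 2-jet map j takes values in Ω. Then the integrability expression vanishes along the solution: (Δ H)(j(x,y)) = (D³ G)(j(x,y)) for all (x,y) ∈ U. -/
/-- Partial derivative of a function on `ℝ⁵` (coordinates `(x,y,z,p,r)` indexed `0,…,4`)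
in the `i`-th coordinate direction. -/
noncomputable def pd (i : Fin 5) (F : (Fin 5 → ℝ) → ℝ) (v : Fin 5 → ℝ) : ℝ :=
  fderiv ℝ F v (Pi.single i 1)

/-- The total derivative operator `D F = F_x + p F_z + r F_p + H F_r`. -/
noncomputable def Dop (H : (Fin 5 → ℝ) → ℝ) (F : (Fin 5 → ℝ) → ℝ) (v : Fin 5 → ℝ) : ℝ :=
  pd 0 F v + v 3 * pd 2 F v + v 4 * pd 3 F v + H v * pd 4 F v

/-- The operator `Δ F = F_y + G F_z + (DG) F_p + (D²G) F_r`. -/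
noncomputable def Delta (G H : (Fin 5 → ℝ) → ℝ) (F : (Fin 5 → ℝ) → ℝ) (v : Fin 5 → ℝ) : ℝ :=
  pd 1 F v + G v * pd 2 F v + Dop H G v * pd 3 F v + Dop H (Dop H G) v * pd 4 F v

/-- `z_x`. -/
noncomputable def zx (z : ℝ → ℝ → ℝ) (x y : ℝ) : ℝ := deriv (fun t => z t y) x
/-- `z_xx`. -/
noncomputable def zxx (z : ℝ → ℝ → ℝ) (x y : ℝ) : ℝ := deriv (fun t => zx z t y) x
/-- `z_xxx`. -/
noncomputable def zxxx (z : ℝ → ℝ → ℝ) (x y : ℝ) : ℝ := deriv (fun t => zxx z t y) x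
/-- `z_y`. -/
noncomputable def zy (z : ℝ → ℝ → ℝ) (x y : ℝ) : ℝ := deriv (fun s => z x s) y

/-- The 2-jet map `j(x,y) = (x, y, z(x,y), z_x(x,y), z_xx(x,y))`. -/
noncomputable def jet (z : ℝ → ℝ → ℝ) (q : ℝ × ℝ) : Fin 5 → ℝ :=
  ![q.1, q.2, z q.1 q.2, zx z q.1 q.2, zxx z q.1 q.2]

/-- `z` is a smooth solution of the PDE system `z_y = G∘j`, `z_xxx = H∘j` on `U`,
with 2-jet map taking values in `Ω`. -/
def IsSolution (Ω : Set (Fin 5 → ℝ)) (G H : (Fin 5 → ℝ) → ℝ)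
    (U : Set (ℝ × ℝ)) (z : ℝ → ℝ → ℝ) : Prop :=
  ContDiffOn ℝ (⊤ : ℕ∞) (fun q : ℝ × ℝ => z q.1 q.2) U ∧
  (∀ q ∈ U, jet z q ∈ Ω) ∧
  (∀ q ∈ U, zy z q.1 q.2 = G (jet z q)) ∧
  (∀ q ∈ U, zxxx z q.1 q.2 = H (jet z q))

/-!
Along the 2-jet `j` of a solution, `∂ₓ (F ∘ j) = (D F) ∘ j` because `z_xxx = H ∘ j`, and
`∂_y (F ∘ j) = (Δ F) ∘ j` as soon as `∂_y ∂ₓᵏ z = (Dᵏ G) ∘ j` for `k < 3`. The latter holds for all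
`k` by induction, since partial derivatives of a smooth function commute:
`∂_y ∂ₓᵏ⁺¹ z = ∂ₓ ∂_y ∂ₓᵏ z = ∂ₓ ((Dᵏ G) ∘ j) = (Dᵏ⁺¹ G) ∘ j`. Hence
`(Δ H) ∘ j = ∂_y (H ∘ j) = ∂_y ∂ₓ³ z = (D³ G) ∘ j`.
-/

open Filter Topology Function
open scoped ContDiff

section PartialDerivatives

variable {E : Type*} [NormedAddCommGroup E] [NormedSpace ℝ E]

noncomputable def partialX (f : ℝ × ℝ → E) (q : ℝ × ℝ) : E := deriv (fun t => f (t, q.2)) q.1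

noncomputable def partialY (f : ℝ × ℝ → E) (q : ℝ × ℝ) : E := deriv (fun s => f (q.1, s)) q.2

variable {f g : ℝ × ℝ → E} {q : ℝ × ℝ} {U : Set (ℝ × ℝ)}

theorem DifferentiableAt.hasDerivAt_slice_fst (hf : DifferentiableAt ℝ f q) :
    HasDerivAt (fun t => f (t, q.2)) (fderiv ℝ f q (1, 0)) q.1 :=
  hf.hasFDerivAt.comp_hasDerivAt q.1 ((hasDerivAt_id q.1).prodMk (hasDerivAt_const q.1 q.2))

theorem DifferentiableAt.hasDerivAt_slice_snd (hf : DifferentiableAt ℝ f q) :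
    HasDerivAt (fun s => f (q.1, s)) (fderiv ℝ f q (0, 1)) q.2 :=
  hf.hasFDerivAt.comp_hasDerivAt q.2 ((hasDerivAt_const q.2 q.1).prodMk (hasDerivAt_id q.2))

theorem partialX_eq_fderiv (hf : DifferentiableAt ℝ f q) : partialX f q = fderiv ℝ f q (1, 0) :=
  hf.hasDerivAt_slice_fst.deriv

theorem partialY_eq_fderiv (hf : DifferentiableAt ℝ f q) : partialY f q = fderiv ℝ f q (0, 1) :=
  hf.hasDerivAt_slice_snd.deriv

theorem hasDerivAt_partialX (hf : DifferentiableAt ℝ f q) :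
    HasDerivAt (fun t => f (t, q.2)) (partialX f q) q.1 :=
  partialX_eq_fderiv hf ▸ hf.hasDerivAt_slice_fst

theorem hasDerivAt_partialY (hf : DifferentiableAt ℝ f q) :
    HasDerivAt (fun s => f (q.1, s)) (partialY f q) q.2 :=
  partialY_eq_fderiv hf ▸ hf.hasDerivAt_slice_snd

theorem partialX_congr (h : f =ᶠ[𝓝 q] g) : partialX f q = partialX g q :=
  (h.comp_tendsto ((continuous_id.prodMk continuous_const).tendsto q.1)).deriv_eq

theorem partialY_congr (h : f =ᶠ[𝓝 q] g) : partialY f q = partialY g q :=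
  (h.comp_tendsto ((continuous_const.prodMk continuous_id).tendsto q.2)).deriv_eq

theorem ContDiffOn.partialX_of_isOpen (hU : IsOpen U) (hf : ContDiffOn ℝ ∞ f U) :
    ContDiffOn ℝ ∞ (partialX f) U :=
  ((hf.fderiv_of_isOpen hU le_rfl).clm_apply contDiffOn_const).congr fun _ hp =>
    partialX_eq_fderiv ((hf.differentiableOn (by simp)).differentiableAt (hU.mem_nhds hp))

theorem ContDiffOn.iterate_partialX_of_isOpen (hU : IsOpen U) (hf : ContDiffOn ℝ ∞ f U) (k : ℕ) :
    ContDiffOn ℝ ∞ (partialX^[k] f) U := by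
  induction k with
  | zero => exact hf
  | succ k ih => simpa only [iterate_succ_apply'] using ih.partialX_of_isOpen hU

theorem partialY_partialX_comm (hf : ContDiffAt ℝ 2 f q) :
    partialY (partialX f) q = partialX (partialY f) q := by
  have hdiff : ∀ᶠ p in 𝓝 q, DifferentiableAt ℝ f p :=
    (hf.eventually (by simp)).mono fun p hp => hp.differentiableAt (by simp)
  have hf' : DifferentiableAt ℝ (fderiv ℝ f) q :=
    (hf.fderiv_right (m := 1) le_rfl).differentiableAt one_ne_zero
  have hYX : partialY (partialX f) q = fderiv ℝ (fderiv ℝ f) q (0, 1) (1, 0) := by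
    rw [partialY_congr (hdiff.mono fun p hp => partialX_eq_fderiv hp),
      partialY_eq_fderiv (hf'.clm_apply (differentiableAt_const _)),
      fderiv_clm_apply hf' (differentiableAt_const _)]
    simp
  have hXY : partialX (partialY f) q = fderiv ℝ (fderiv ℝ f) q (1, 0) (0, 1) := by
    rw [partialX_congr (hdiff.mono fun p hp => partialY_eq_fderiv hp),
      partialX_eq_fderiv (hf'.clm_apply (differentiableAt_const _)),
      fderiv_clm_apply hf' (differentiableAt_const _)]
    simp
  rw [hYX, hXY, (hf.isSymmSndFDerivAt (by simp)).eq]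

theorem ContDiffOn.differentiableAt_iterate_partialX (hf : ContDiffOn ℝ ∞ f U) (hU : IsOpen U)
    (hq : q ∈ U) (k : ℕ) : DifferentiableAt ℝ (partialX^[k] f) q :=
  ((hf.iterate_partialX_of_isOpen hU k).differentiableOn (by simp)).differentiableAt
    (hU.mem_nhds hq)

end PartialDerivatives

theorem fderiv_apply_eq_sum_pd (F : (Fin 5 → ℝ) → ℝ) (v w : Fin 5 → ℝ) :
    fderiv ℝ F v w = ∑ i, w i * pd i F v := by
  conv_lhs => rw [pi_eq_sum_univ' w]
  simp [pd, map_sum, smul_eq_mul]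

theorem ContDiffOn.Dop_of_isOpen {Ω : Set (Fin 5 → ℝ)} {H F : (Fin 5 → ℝ) → ℝ}
    (hF : ContDiffOn ℝ ∞ F Ω) (hΩ : IsOpen Ω) (hH : ContDiffOn ℝ ∞ H Ω) :
    ContDiffOn ℝ ∞ (Dop H F) Ω := by
  have hpd (i : Fin 5) : ContDiffOn ℝ ∞ (pd i F) Ω :=
    (hF.fderiv_of_isOpen hΩ le_rfl).clm_apply contDiffOn_const
  have hcoord (i : Fin 5) : ContDiffOn ℝ ∞ (fun v : Fin 5 → ℝ => v i) Ω :=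
    (contDiff_apply ℝ ℝ i).contDiffOn
  exact (((hpd 0).add ((hcoord 3).mul (hpd 2))).add ((hcoord 4).mul (hpd 3))).add (hH.mul (hpd 4))

theorem ContDiffOn.iterate_Dop_of_isOpen {Ω : Set (Fin 5 → ℝ)} {G H : (Fin 5 → ℝ) → ℝ}
    (hG : ContDiffOn ℝ ∞ G Ω) (hΩ : IsOpen Ω) (hH : ContDiffOn ℝ ∞ H Ω) (k : ℕ) :
    ContDiffOn ℝ ∞ ((Dop H)^[k] G) Ω := by
  induction k with
  | zero => exact hG
  | succ k ih => simpa only [iterate_succ_apply'] using ih.Dop_of_isOpen hΩ hH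

section Jet

variable {z : ℝ → ℝ → ℝ} {U : Set (ℝ × ℝ)} {q : ℝ × ℝ}

theorem jet_eq (z : ℝ → ℝ → ℝ) (q : ℝ × ℝ) :
    jet z q = ![q.1, q.2, uncurry z q, partialX (uncurry z) q, partialX^[2] (uncurry z) q] :=
  rfl

theorem zxxx_eq (z : ℝ → ℝ → ℝ) (q : ℝ × ℝ) : zxxx z q.1 q.2 = partialX^[3] (uncurry z) q :=
  rfl

theorem hasDerivAt_jet_fst (hz : ContDiffOn ℝ ∞ (uncurry z) U) (hU : IsOpen U) (hq : q ∈ U) :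
    HasDerivAt (fun t => jet z (t, q.2))
      ![1, 0, partialX (uncurry z) q, partialX^[2] (uncurry z) q, partialX^[3] (uncurry z) q]
      q.1 := by
  have hpx (k : ℕ) := hasDerivAt_partialX (hz.differentiableAt_iterate_partialX hU hq k)
  simp only [jet_eq]
  refine hasDerivAt_pi.2 fun i => ?_
  fin_cases i
  · simpa using hasDerivAt_id' q.1
  · simpa using hasDerivAt_const q.1 q.2
  · simpa using hpx 0
  · simpa using hpx 1
  · simpa [iterate_succ_apply'] using hpx 2

theorem hasDerivAt_jet_snd (hz : ContDiffOn ℝ ∞ (uncurry z) U) (hU : IsOpen U) (hq : q ∈ U) :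
    HasDerivAt (fun s => jet z (q.1, s))
      ![0, 1, partialY (uncurry z) q, partialY (partialX (uncurry z)) q,
        partialY (partialX^[2] (uncurry z)) q] q.2 := by
  have hpy (k : ℕ) := hasDerivAt_partialY (hz.differentiableAt_iterate_partialX hU hq k)
  simp only [jet_eq]
  refine hasDerivAt_pi.2 fun i => ?_
  fin_cases i
  · simpa using hasDerivAt_const q.2 q.1
  · simpa using hasDerivAt_id' q.2
  · simpa using hpy 0
  · simpa using hpy 1
  · simpa using hpy 2

theorem hasDerivAt_comp_jet_fst {H F : (Fin 5 → ℝ) → ℝ} (hz : ContDiffOn ℝ ∞ (uncurry z) U)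
    (hU : IsOpen U) (hq : q ∈ U) (hH : zxxx z q.1 q.2 = H (jet z q))
    (hF : DifferentiableAt ℝ F (jet z q)) :
    HasDerivAt (fun t => F (jet z (t, q.2))) (Dop H F (jet z q)) q.1 := by
  refine (hF.hasFDerivAt.comp_hasDerivAt q.1 (hasDerivAt_jet_fst hz hU hq)).congr_deriv ?_
  rw [fderiv_apply_eq_sum_pd, Fin.sum_univ_five, ← zxxx_eq, hH]
  simp [Dop, jet_eq]

theorem hasDerivAt_comp_jet_snd {G H F : (Fin 5 → ℝ) → ℝ} (hz : ContDiffOn ℝ ∞ (uncurry z) U)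
    (hU : IsOpen U) (hq : q ∈ U)
    (hG : ∀ k < 3, partialY (partialX^[k] (uncurry z)) q = (Dop H)^[k] G (jet z q))
    (hF : DifferentiableAt ℝ F (jet z q)) :
    HasDerivAt (fun s => F (jet z (q.1, s))) (Delta G H F (jet z q)) q.2 := by
  refine (hF.hasFDerivAt.comp_hasDerivAt q.2 (hasDerivAt_jet_snd hz hU hq)).congr_deriv ?_
  rw [fderiv_apply_eq_sum_pd, Fin.sum_univ_five]
  have h₀ := hG 0 (by norm_num)
  have h₁ := hG 1 (by norm_num)
  have h₂ := hG 2 (by norm_num)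
  simp only [iterate_zero_apply, iterate_succ_apply'] at h₀ h₁ h₂
  simp [Delta, h₀, h₁, h₂]

end Jet

theorem partialY_iterate_partialX_eq_iterate_Dop {Ω : Set (Fin 5 → ℝ)} {G H : (Fin 5 → ℝ) → ℝ}
    {U : Set (ℝ × ℝ)} {z : ℝ → ℝ → ℝ} (hΩ : IsOpen Ω) (hG : ContDiffOn ℝ ∞ G Ω)
    (hH : ContDiffOn ℝ ∞ H Ω) (hU : IsOpen U) (hz : IsSolution Ω G H U z) (k : ℕ) :
    ∀ q ∈ U, partialY (partialX^[k] (uncurry z)) q = (Dop H)^[k] G (jet z q) := by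
  obtain ⟨hzC, hjet, hzy, hzxxx⟩ : ContDiffOn ℝ ∞ (uncurry z) U ∧ _ := hz
  induction k with
  | zero => exact hzy
  | succ k ih =>
    intro q hq
    have hFk := hG.iterate_Dop_of_isOpen hΩ hH k
    rw [iterate_succ_apply', iterate_succ_apply',
      partialY_partialX_comm (((hzC.iterate_partialX_of_isOpen hU k).contDiffAt
        (hU.mem_nhds hq)).of_le (m := 2) (WithTop.coe_le_coe.2 le_top)),
      partialX_congr (eventuallyEq_of_mem (hU.mem_nhds hq) ih)]
    exact (hasDerivAt_comp_jet_fst hzC hU hq (hzxxx q hq)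
      ((hFk.differentiableOn (by simp)).differentiableAt (hΩ.mem_nhds (hjet q hq)))).deriv

/-- The integrability expression `Δ H − D³ G` vanishes along the 2-jet of
any smooth solution of the PDE system. -/
theorem integrability_along_solution
    (Ω : Set (Fin 5 → ℝ)) (hΩ : IsOpen Ω) (G H : (Fin 5 → ℝ) → ℝ)
    (hG : ContDiffOn ℝ (⊤ : ℕ∞) G Ω) (hH : ContDiffOn ℝ (⊤ : ℕ∞) H Ω)
    (U : Set (ℝ × ℝ)) (hU : IsOpen U) (z : ℝ → ℝ → ℝ)
    (hz : IsSolution Ω G H U z) :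
    ∀ q ∈ U, Delta G H H (jet z q) = Dop H (Dop H (Dop H G)) (jet z q) := by
  intro q hq
  have hY := partialY_iterate_partialX_eq_iterate_Dop hΩ hG hH hU hz
  have hHz : (fun p => H (jet z p)) =ᶠ[𝓝 q] partialX^[3] (uncurry z) :=
    eventuallyEq_of_mem (hU.mem_nhds hq) fun p hp => (hz.2.2.2 p hp).symm
  calc Delta G H H (jet z q) = partialY (fun p => H (jet z p)) q :=
        (hasDerivAt_comp_jet_snd hz.1 hU hq (fun k _ => hY k q hq)
          ((hH.contDiffAt (hΩ.mem_nhds (hz.2.1 q hq))).differentiableAt (by simp))).deriv.symm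
    _ = partialY (partialX^[3] (uncurry z)) q := partialY_congr hHz
    _ = Dop H (Dop H (Dop H G)) (jet z q) := hY 3 q hq
end

section
/- Let Ω ⊆ ℝ⁵ be open and let G, H : Ω → ℝ be smooth. Suppose that through every point of Ω there passes the 2-jet of a solution: for every (x₀,y₀,z₀,p₀,r₀) ∈ Ω there exist an open neighborhood V of (x₀,y₀) and a smooth solution z : V → ℝ of the system z_y = G(x,y,z,z_x,z_xx), z_xxx = H(x,y,z,z_x,z_xx), with 2-jet map taking values in Ω, such that z(x₀,y₀) = z₀, z_x(x₀,y₀) = p₀ and z_xx(x₀,y₀) = r₀. Then Δ H = D³ G identically on Ω. -/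
/-!
Along a solution `z` with jet `j`, the chain rule turns `∂ₓ (F ∘ j)` into `(D F) ∘ j` (because
`z_xxx = H ∘ j`) and `∂_y (F ∘ j)` into `(Δ F) ∘ j`; the latter needs `∂_y z_x = (D G) ∘ j` and
`∂_y z_xx = (D² G) ∘ j`, which follow from `z_y = G ∘ j` by commuting mixed partials. Commuting them
once more gives `(Δ H) ∘ j = ∂_y z_xxx = ∂ₓ ∂_y z_xx = (D³ G) ∘ j`, and evaluating at the point
where the jet of `z` passes through `v` gives `Δ H = D³ G` at `v`.
-/

open Filter Function Topology
open scoped ContDiff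

section Calculus

variable {E : Type*} [NormedAddCommGroup E] [NormedSpace ℝ E]

theorem fderiv_fderiv_apply_comm {f : E → ℝ} {q : E} (hf : ContDiffAt ℝ 2 f q) (u w : E) :
    fderiv ℝ (fun p => fderiv ℝ f p u) q w = fderiv ℝ (fun p => fderiv ℝ f p w) q u := by
  have hd : DifferentiableAt ℝ (fderiv ℝ f) q :=
    (hf.fderiv_right (m := 1) le_rfl).differentiableAt one_ne_zero
  rw [fderiv_clm_apply hd (differentiableAt_const u),
    fderiv_clm_apply hd (differentiableAt_const w)]
  simpa using hf.isSymmSndFDerivAt (by simp) w u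

theorem fderiv_apply_eq_sum {ι : Type*} [Fintype ι] [DecidableEq ι] (F : (ι → ℝ) → ℝ)
    (m u : ι → ℝ) : fderiv ℝ F m u = ∑ i, u i * fderiv ℝ F m (Pi.single i 1) := by
  conv_lhs => rw [pi_eq_sum_univ' u, map_sum]
  simp [smul_eq_mul]

theorem fderiv_comp_pi_apply {ι : Type*} [Fintype ι] [DecidableEq ι] {F : (ι → ℝ) → ℝ}
    {φ : ι → E → ℝ} {q : E} (hF : DifferentiableAt ℝ F (fun i => φ i q))
    (hφ : ∀ i, DifferentiableAt ℝ (φ i) q) (u : E) :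
    fderiv ℝ (fun p => F (fun i => φ i p)) q u =
      ∑ i, fderiv ℝ (φ i) q u * fderiv ℝ F (fun i => φ i q) (Pi.single i 1) := by
  have hΦ := hasFDerivAt_pi.2 fun i => (hφ i).hasFDerivAt
  rw [show fderiv ℝ (fun p => F (fun i => φ i p)) q = _ from (hF.hasFDerivAt.comp q hΦ).fderiv,
    ContinuousLinearMap.comp_apply, fderiv_apply_eq_sum]
  rfl

theorem ContDiffOn.differentiableAt_of_isOpen {s : Set E} {f : E → ℝ} (hf : ContDiffOn ℝ ∞ f s)
    (hs : IsOpen s) {q : E} (hq : q ∈ s) : DifferentiableAt ℝ f q :=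
  (hf.differentiableOn (by simp)).differentiableAt (hs.mem_nhds hq)

end Calculus

section PartialDerivatives

noncomputable def pdx (f : ℝ × ℝ → ℝ) (q : ℝ × ℝ) : ℝ := fderiv ℝ f q (1, 0)

noncomputable def pdy (f : ℝ × ℝ → ℝ) (q : ℝ × ℝ) : ℝ := fderiv ℝ f q (0, 1)

variable {V : Set (ℝ × ℝ)} {f g : ℝ × ℝ → ℝ}

theorem pdx_pdy_comm {q : ℝ × ℝ} (hf : ContDiffAt ℝ 2 f q) : pdx (pdy f) q = pdy (pdx f) q :=
  fderiv_fderiv_apply_comm hf _ _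

theorem ContDiffOn.pdx (hf : ContDiffOn ℝ ∞ f V) (hV : IsOpen V) : ContDiffOn ℝ ∞ (pdx f) V :=
  (hf.fderiv_of_isOpen hV (by simp)).clm_apply contDiffOn_const

theorem pdx_congr_of_eqOn (hV : IsOpen V) (h : Set.EqOn f g V) {q : ℝ × ℝ} (hq : q ∈ V) :
    pdx f q = pdx g q := by
  rw [pdx, pdx, (h.eventuallyEq_of_mem (hV.mem_nhds hq)).fderiv_eq]

theorem pdy_congr_of_eqOn (hV : IsOpen V) (h : Set.EqOn f g V) {q : ℝ × ℝ} (hq : q ∈ V) :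
    pdy f q = pdy g q := by
  rw [pdy, pdy, (h.eventuallyEq_of_mem (hV.mem_nhds hq)).fderiv_eq]

theorem deriv_fst_eq_pdx_of_eqOn (hV : IsOpen V) {u : ℝ → ℝ → ℝ} (huf : ∀ q ∈ V, u q.1 q.2 = f q)
    {x y : ℝ} (hxy : (x, y) ∈ V) (hf : DifferentiableAt ℝ f (x, y)) :
    deriv (fun t => u t y) x = pdx f (x, y) := by
  have hslice : HasDerivAt (fun t => f (t, y)) (pdx f (x, y)) x :=
    hf.hasFDerivAt.comp_hasDerivAt x ((hasDerivAt_id x).prodMk (hasDerivAt_const x y))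
  refine (hslice.congr_of_eventuallyEq ?_).deriv
  filter_upwards [(continuous_id.prodMk continuous_const).continuousAt.preimage_mem_nhds
    (hV.mem_nhds hxy)] with t ht using huf (t, y) ht

theorem deriv_snd_eq_pdy_of_eqOn (hV : IsOpen V) {u : ℝ → ℝ → ℝ} (huf : ∀ q ∈ V, u q.1 q.2 = f q)
    {x y : ℝ} (hxy : (x, y) ∈ V) (hf : DifferentiableAt ℝ f (x, y)) :
    deriv (fun s => u x s) y = pdy f (x, y) := by
  have hslice : HasDerivAt (fun s => f (x, s)) (pdy f (x, y)) y :=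
    hf.hasFDerivAt.comp_hasDerivAt y ((hasDerivAt_const y x).prodMk (hasDerivAt_id y))
  refine (hslice.congr_of_eventuallyEq ?_).deriv
  filter_upwards [(continuous_const.prodMk continuous_id).continuousAt.preimage_mem_nhds
    (hV.mem_nhds hxy)] with s hs using huf (x, s) hs

end PartialDerivatives

section TotalDerivative

variable {Ω : Set (Fin 5 → ℝ)} {H K : (Fin 5 → ℝ) → ℝ}

theorem ContDiffOn.dop (hK : ContDiffOn ℝ ∞ K Ω) (hΩ : IsOpen Ω) (hH : ContDiffOn ℝ ∞ H Ω) :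
    ContDiffOn ℝ ∞ (Dop H K) Ω := by
  have hpd : ∀ i, ContDiffOn ℝ ∞ (pd i K) Ω := fun i =>
    (hK.fderiv_of_isOpen hΩ (by simp)).clm_apply contDiffOn_const
  have hcoord : ∀ i : Fin 5, ContDiffOn ℝ ∞ (fun v : Fin 5 → ℝ => v i) Ω := fun i =>
    (contDiff_apply ℝ ℝ i).contDiffOn
  exact (((hpd 0).add ((hcoord 3).mul (hpd 2))).add ((hcoord 4).mul (hpd 3))).add (hH.mul (hpd 4))

end TotalDerivative

theorem jet_eq_of_apply_eq {z : ℝ → ℝ → ℝ} {v : Fin 5 → ℝ} (h2 : z (v 0) (v 1) = v 2)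
    (h3 : zx z (v 0) (v 1) = v 3) (h4 : zxx z (v 0) (v 1) = v 4) : jet z (v 0, v 1) = v := by
  ext i
  fin_cases i <;> simp [jet, *]

namespace IsSolution

variable {Ω : Set (Fin 5 → ℝ)} {G H : (Fin 5 → ℝ) → ℝ} {V : Set (ℝ × ℝ)} {z : ℝ → ℝ → ℝ}

theorem contDiffOn_uncurry (hz : IsSolution Ω G H V z) : ContDiffOn ℝ ∞ (uncurry z) V :=
  hz.1

theorem zx_eq (hV : IsOpen V) (hz : IsSolution Ω G H V z) {q : ℝ × ℝ} (hq : q ∈ V) :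
    zx z q.1 q.2 = pdx (uncurry z) q :=
  deriv_fst_eq_pdx_of_eqOn hV (fun _ _ => rfl) hq
    (hz.contDiffOn_uncurry.differentiableAt_of_isOpen hV hq)

theorem zxx_eq (hV : IsOpen V) (hz : IsSolution Ω G H V z) {q : ℝ × ℝ} (hq : q ∈ V) :
    zxx z q.1 q.2 = pdx (pdx (uncurry z)) q :=
  deriv_fst_eq_pdx_of_eqOn hV (fun _ hp => hz.zx_eq hV hp) hq
    ((hz.contDiffOn_uncurry.pdx hV).differentiableAt_of_isOpen hV hq)

theorem zxxx_eq (hV : IsOpen V) (hz : IsSolution Ω G H V z) {q : ℝ × ℝ} (hq : q ∈ V) :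
    zxxx z q.1 q.2 = pdx (pdx (pdx (uncurry z))) q :=
  deriv_fst_eq_pdx_of_eqOn hV (fun _ hp => hz.zxx_eq hV hp) hq
    (((hz.contDiffOn_uncurry.pdx hV).pdx hV).differentiableAt_of_isOpen hV hq)

theorem zy_eq (hV : IsOpen V) (hz : IsSolution Ω G H V z) {q : ℝ × ℝ} (hq : q ∈ V) :
    zy z q.1 q.2 = pdy (uncurry z) q :=
  deriv_snd_eq_pdy_of_eqOn hV (fun _ _ => rfl) hq
    (hz.contDiffOn_uncurry.differentiableAt_of_isOpen hV hq)

theorem jet_eq (hV : IsOpen V) (hz : IsSolution Ω G H V z) {q : ℝ × ℝ} (hq : q ∈ V) :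
    jet z q = ![q.1, q.2, uncurry z q, pdx (uncurry z) q, pdx (pdx (uncurry z)) q] := by
  rw [jet, hz.zx_eq hV hq, hz.zxx_eq hV hq]
  rfl

theorem pdx_pdx_pdx_eq (hV : IsOpen V) (hz : IsSolution Ω G H V z) {q : ℝ × ℝ} (hq : q ∈ V) :
    pdx (pdx (pdx (uncurry z))) q = H (jet z q) :=
  (hz.zxxx_eq hV hq).symm.trans (hz.2.2.2 q hq)

theorem pdy_eq (hV : IsOpen V) (hz : IsSolution Ω G H V z) {q : ℝ × ℝ} (hq : q ∈ V) :
    pdy (uncurry z) q = G (jet z q) :=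
  (hz.zy_eq hV hq).symm.trans (hz.2.2.1 q hq)

theorem differentiableAt_jet (hΩ : IsOpen Ω) (hz : IsSolution Ω G H V z)
    {K : (Fin 5 → ℝ) → ℝ} (hK : ContDiffOn ℝ ∞ K Ω) {q : ℝ × ℝ} (hq : q ∈ V) :
    DifferentiableAt ℝ K (jet z q) :=
  hK.differentiableAt_of_isOpen hΩ (hz.2.1 q hq)

theorem fderiv_comp_jet (hV : IsOpen V) (hz : IsSolution Ω G H V z) {F : (Fin 5 → ℝ) → ℝ}
    {q : ℝ × ℝ} (hq : q ∈ V) (hF : DifferentiableAt ℝ F (jet z q)) (u : ℝ × ℝ) :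
    fderiv ℝ (fun p => F (jet z p)) q u =
      u.1 * pd 0 F (jet z q) + u.2 * pd 1 F (jet z q) +
        fderiv ℝ (uncurry z) q u * pd 2 F (jet z q) +
        fderiv ℝ (pdx (uncurry z)) q u * pd 3 F (jet z q) +
        fderiv ℝ (pdx (pdx (uncurry z))) q u * pd 4 F (jet z q) := by
  set φ : Fin 5 → ℝ × ℝ → ℝ :=
    ![Prod.fst, Prod.snd, uncurry z, pdx (uncurry z), pdx (pdx (uncurry z))]
  have hjet : Set.EqOn (jet z) (fun p i => φ i p) V := fun p hp => by
    rw [hz.jet_eq hV hp]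
    ext i
    fin_cases i <;> rfl
  have hφ : ∀ i, DifferentiableAt ℝ (φ i) q := by
    intro i
    fin_cases i
    · exact differentiableAt_fst
    · exact differentiableAt_snd
    · exact hz.contDiffOn_uncurry.differentiableAt_of_isOpen hV hq
    · exact (hz.contDiffOn_uncurry.pdx hV).differentiableAt_of_isOpen hV hq
    · exact ((hz.contDiffOn_uncurry.pdx hV).pdx hV).differentiableAt_of_isOpen hV hq
  have hev : (fun p => F (jet z p)) =ᶠ[𝓝 q] fun p => F (fun i => φ i p) :=
    Filter.eventually_of_mem (hV.mem_nhds hq) fun p hp => congrArg F (hjet hp)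
  have hjq : jet z q = fun i => φ i q := hjet hq
  rw [hjq] at hF ⊢
  rw [hev.fderiv_eq, fderiv_comp_pi_apply hF hφ u, Fin.sum_univ_five]
  simp [φ, pd, fderiv_fst, fderiv_snd]

theorem pdx_comp_jet (hV : IsOpen V) (hz : IsSolution Ω G H V z) {F : (Fin 5 → ℝ) → ℝ}
    {q : ℝ × ℝ} (hq : q ∈ V) (hF : DifferentiableAt ℝ F (jet z q)) :
    pdx (fun p => F (jet z p)) q = Dop H F (jet z q) := by
  rw [pdx, hz.fderiv_comp_jet hV hq hF, Dop, ← hz.pdx_pdx_pdx_eq hV hq, hz.jet_eq hV hq]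
  simp [pdx]

theorem pdy_pdx_of_pdy_eq (hΩ : IsOpen Ω) (hV : IsOpen V) (hz : IsSolution Ω G H V z)
    {f : ℝ × ℝ → ℝ} (hf : ContDiffOn ℝ ∞ f V) {K : (Fin 5 → ℝ) → ℝ} (hK : ContDiffOn ℝ ∞ K Ω)
    (hfK : ∀ q ∈ V, pdy f q = K (jet z q)) {q : ℝ × ℝ} (hq : q ∈ V) :
    pdy (pdx f) q = Dop H K (jet z q) := by
  rw [← pdx_pdy_comm ((hf.contDiffAt (hV.mem_nhds hq)).of_le ENat.LEInfty.out),
    pdx_congr_of_eqOn hV hfK hq]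
  exact hz.pdx_comp_jet hV hq (hz.differentiableAt_jet hΩ hK hq)

theorem pdy_pdx_eq (hΩ : IsOpen Ω) (hG : ContDiffOn ℝ ∞ G Ω) (hV : IsOpen V)
    (hz : IsSolution Ω G H V z) {q : ℝ × ℝ} (hq : q ∈ V) :
    pdy (pdx (uncurry z)) q = Dop H G (jet z q) :=
  hz.pdy_pdx_of_pdy_eq hΩ hV hz.contDiffOn_uncurry hG (fun _ hp => hz.pdy_eq hV hp) hq

theorem pdy_pdx_pdx_eq (hΩ : IsOpen Ω) (hG : ContDiffOn ℝ ∞ G Ω) (hH : ContDiffOn ℝ ∞ H Ω)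
    (hV : IsOpen V) (hz : IsSolution Ω G H V z) {q : ℝ × ℝ} (hq : q ∈ V) :
    pdy (pdx (pdx (uncurry z))) q = Dop H (Dop H G) (jet z q) :=
  hz.pdy_pdx_of_pdy_eq hΩ hV (hz.contDiffOn_uncurry.pdx hV) (hG.dop hΩ hH)
    (fun _ hp => hz.pdy_pdx_eq hΩ hG hV hp) hq

theorem pdy_comp_jet (hΩ : IsOpen Ω) (hG : ContDiffOn ℝ ∞ G Ω) (hH : ContDiffOn ℝ ∞ H Ω)
    (hV : IsOpen V) (hz : IsSolution Ω G H V z) {F : (Fin 5 → ℝ) → ℝ} {q : ℝ × ℝ} (hq : q ∈ V)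
    (hF : DifferentiableAt ℝ F (jet z q)) :
    pdy (fun p => F (jet z p)) q = Delta G H F (jet z q) := by
  rw [pdy, hz.fderiv_comp_jet hV hq hF, Delta, ← hz.pdy_eq hV hq, ← hz.pdy_pdx_eq hΩ hG hV hq,
    ← hz.pdy_pdx_pdx_eq hΩ hG hH hV hq]
  simp [pdy]

end IsSolution

/-- If through every point of `Ω` there passes the 2-jet of a smooth
solution of the PDE system, then `Δ H = D³ G` identically on `Ω`. -/
theorem integrability_of_solvability
    (Ω : Set (Fin 5 → ℝ)) (hΩ : IsOpen Ω) (G H : (Fin 5 → ℝ) → ℝ)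
    (hG : ContDiffOn ℝ (⊤ : ℕ∞) G Ω) (hH : ContDiffOn ℝ (⊤ : ℕ∞) H Ω)
    (hsol : ∀ v ∈ Ω, ∃ V : Set (ℝ × ℝ), IsOpen V ∧ (v 0, v 1) ∈ V ∧
      ∃ z : ℝ → ℝ → ℝ, IsSolution Ω G H V z ∧
        z (v 0) (v 1) = v 2 ∧ zx z (v 0) (v 1) = v 3 ∧ zxx z (v 0) (v 1) = v 4) :
    ∀ v ∈ Ω, Delta G H H v = Dop H (Dop H (Dop H G)) v := by
  intro v hv
  obtain ⟨V, hV, hq, z, hz, h2, h3, h4⟩ := hsol v hv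
  have hjet : jet z (v 0, v 1) = v := jet_eq_of_apply_eq h2 h3 h4
  calc Delta G H H v = pdy (fun p => H (jet z p)) (v 0, v 1) := by
        rw [hz.pdy_comp_jet hΩ hG hH hV hq (hz.differentiableAt_jet hΩ hH hq), hjet]
    _ = pdy (pdx (pdx (pdx (uncurry z)))) (v 0, v 1) :=
        pdy_congr_of_eqOn hV (fun _ hp => (hz.pdx_pdx_pdx_eq hV hp).symm) hq
    _ = Dop H (Dop H (Dop H G)) v := by
        rw [hz.pdy_pdx_of_pdy_eq hΩ hV ((hz.contDiffOn_uncurry.pdx hV).pdx hV)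
          ((hG.dop hΩ hH).dop hΩ hH) (fun _ hp => hz.pdy_pdx_pdx_eq hΩ hG hH hV hp) hq, hjet]
end

section
/- Let G be a smooth real-valued function on an interval I ⊆ ℝ and let a₁, a₂, a₃, a₄, a₅, a₆ be real constants such that a₁ G(p)² + 2 a₂ p G(p) + a₃ p² + a₄ G(p) + a₅ p + a₆ = 0 for all p ∈ I (i.e. the graph of G lies on a conic). Then a₁ · G''(p) · M(G)(p) = 0 for all p ∈ I, where M(G) = 40 G'''³ − 45 G'' G''' G'''' + 9 G''² G''''' is the Monge expression. In particular, if a₁ ≠ 0 and G'' is nowhere vanishing on I, then G satisfies the Monge equation 40 G'''(p)³ − 45 G''(p) G'''(p) G''''(p) + 9 G''(p)² G'''''(p) = 0 on I. -/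
open Filter

/-- On an open set, a `C^∞` function's iterated derivatives are differentiable, with
derivative the next iterated derivative. -/
lemma hasDerivAt_iteratedDeriv_of_contDiffOn {I : Set ℝ} (hI : IsOpen I)
    {G : ℝ → ℝ} (hG : ContDiffOn ℝ (⊤ : ℕ∞) G I) (n : ℕ) {p : ℝ} (hp : p ∈ I) :
    HasDerivAt (iteratedDeriv n G) (iteratedDeriv (n + 1) G p) p := by
  have heq : ∀ q ∈ I, iteratedDerivWithin n G I q = iteratedDeriv n G q := by
    intro q hq
    simp [iteratedDerivWithin, iteratedDeriv, iteratedFDerivWithin_of_isOpen n hI hq]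
  have hdw : DifferentiableWithinAt ℝ (iteratedDerivWithin n G I) I p :=
    hG.differentiableOn_iteratedDerivWithin (by exact_mod_cast WithTop.coe_lt_top n)
      hI.uniqueDiffOn p hp
  have hda : DifferentiableAt ℝ (iteratedDerivWithin n G I) p :=
    hdw.differentiableAt (hI.mem_nhds hp)
  have hev : iteratedDeriv n G =ᶠ[nhds p] iteratedDerivWithin n G I :=
    eventually_of_mem (hI.mem_nhds hp) (fun q hq => (heq q hq).symm)
  have hda' : DifferentiableAt ℝ (iteratedDeriv n G) p := hda.congr_of_eventuallyEq hev
  have := hda'.hasDerivAt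
  rwa [← iteratedDeriv_succ] at this

/-- If a function vanishes on an open set and has the given derivative there, the
derivative vanishes there too. -/
lemma deriv_zero_of_eq_zero_on {I : Set ℝ} (hI : IsOpen I) {f f' : ℝ → ℝ}
    (hf : ∀ p ∈ I, HasDerivAt f (f' p) p) (h0 : ∀ p ∈ I, f p = 0) :
    ∀ p ∈ I, f' p = 0 := by
  intro p hp
  have hev : f =ᶠ[nhds p] (fun _ => (0 : ℝ)) :=
    eventually_of_mem (hI.mem_nhds hp) h0
  have h := (hf p hp).congr_of_eventuallyEq hev.symm
  exact h.unique (hasDerivAt_const p 0)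

/-- The Monge expression `M(G) = 40 G'''³ − 45 G'' G''' G'''' + 9 G''² G'''''`. -/
noncomputable def monge (G : ℝ → ℝ) (p : ℝ) : ℝ :=
  40 * (iteratedDeriv 3 G p) ^ 3
    - 45 * iteratedDeriv 2 G p * iteratedDeriv 3 G p * iteratedDeriv 4 G p
    + 9 * (iteratedDeriv 2 G p) ^ 2 * iteratedDeriv 5 G p

/-- If the graph of a smooth function `G` on an open interval lies on a conic
`a₁G² + 2a₂pG + a₃p² + a₄G + a₅p + a₆ = 0`, then `a₁ · G'' · M(G) = 0` on the interval;
in particular if `a₁ ≠ 0` and `G''` is nowhere vanishing, `G` satisfies Monge's equation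
`M(G) = 0`. -/
theorem conic_implies_monge
    (I : Set ℝ) (hI : IsOpen I) (hI' : Convex ℝ I)
    (G : ℝ → ℝ) (hG : ContDiffOn ℝ (⊤ : ℕ∞) G I)
    (a₁ a₂ a₃ a₄ a₅ a₆ : ℝ)
    (hconic : ∀ p ∈ I,
      a₁ * G p ^ 2 + 2 * a₂ * p * G p + a₃ * p ^ 2 + a₄ * G p + a₅ * p + a₆ = 0) :
    (∀ p ∈ I, a₁ * iteratedDeriv 2 G p * monge G p = 0) ∧
    (a₁ ≠ 0 → (∀ p ∈ I, iteratedDeriv 2 G p ≠ 0) →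
      ∀ p ∈ I, 40 * (iteratedDeriv 3 G p) ^ 3
        - 45 * iteratedDeriv 2 G p * iteratedDeriv 3 G p * iteratedDeriv 4 G p
        + 9 * (iteratedDeriv 2 G p) ^ 2 * iteratedDeriv 5 G p = 0) := by
  set d : ℕ → ℝ → ℝ := fun n => iteratedDeriv n G with hd
  have hD : ∀ (n : ℕ), ∀ p ∈ I, HasDerivAt (d n) (d (n + 1) p) p := fun n p hp =>
    hasDerivAt_iteratedDeriv_of_contDiffOn hI hG n hp
  have hd0 : ∀ p, d 0 p = G p := fun p => by simp [hd, iteratedDeriv_zero]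
  set u : ℝ → ℝ := fun p => 2 * a₁ * d 0 p + 2 * a₂ * p + a₄ with hu
  set F0 : ℝ → ℝ := fun p =>
    a₁ * d 0 p ^ 2 + 2 * a₂ * p * d 0 p + a₃ * p ^ 2 + a₄ * d 0 p + a₅ * p + a₆ with hF0
  set F1 : ℝ → ℝ := fun p => u p * d 1 p + 2 * a₂ * d 0 p + 2 * a₃ * p + a₅ with hF1
  set F2 : ℝ → ℝ := fun p =>
    u p * d 2 p + 2 * a₁ * d 1 p ^ 2 + 4 * a₂ * d 1 p + 2 * a₃ with hF2
  set F3 : ℝ → ℝ := fun p =>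
    u p * d 3 p + 6 * (a₁ * d 1 p + a₂) * d 2 p with hF3
  set F4 : ℝ → ℝ := fun p =>
    u p * d 4 p + 8 * (a₁ * d 1 p + a₂) * d 3 p + 6 * a₁ * d 2 p ^ 2 with hF4
  set F5 : ℝ → ℝ := fun p =>
    u p * d 5 p + 10 * (a₁ * d 1 p + a₂) * d 4 p + 20 * a₁ * d 2 p * d 3 p with hF5
  have hD01 : ∀ p ∈ I, HasDerivAt F0 (F1 p) p := by
    intro p hp
    have h0 : HasDerivAt (d 0) (d 1 p) p := hD 0 p hp
    have H : HasDerivAt F0 _ p :=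
      ((((((h0.pow 2).const_mul a₁).add
        (((hasDerivAt_id p).const_mul (2 * a₂)).mul h0)).add
        ((hasDerivAt_pow 2 p).const_mul a₃)).add
        (h0.const_mul a₄)).add
        ((hasDerivAt_id p).const_mul a₅)).add_const a₆
    exact H.congr_deriv (by simp only [hF1, hu, id_eq]; ring)
  have hu' : ∀ p ∈ I, HasDerivAt u (2 * a₁ * d 1 p + 2 * a₂ * 1) p := by
    intro p hp
    have h0 : HasDerivAt (d 0) (d 1 p) p := hD 0 p hp
    exact ((h0.const_mul (2 * a₁)).add ((hasDerivAt_id p).const_mul (2 * a₂))).add_const a₄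
      |>.congr_deriv (by ring)
  have hD12 : ∀ p ∈ I, HasDerivAt F1 (F2 p) p := by
    intro p hp
    have h0 : HasDerivAt (d 0) (d 1 p) p := hD 0 p hp
    have h1 : HasDerivAt (d 1) (d 2 p) p := hD 1 p hp
    have H : HasDerivAt F1 _ p :=
      ((((hu' p hp).mul h1).add (h0.const_mul (2 * a₂))).add
        ((hasDerivAt_id p).const_mul (2 * a₃))).add_const a₅
    exact H.congr_deriv (by simp only [hF2, hu, id_eq]; ring)
  have hD23 : ∀ p ∈ I, HasDerivAt F2 (F3 p) p := by
    intro p hp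
    have h1 : HasDerivAt (d 1) (d 2 p) p := hD 1 p hp
    have h2 : HasDerivAt (d 2) (d 3 p) p := hD 2 p hp
    have H : HasDerivAt F2 _ p :=
      ((((hu' p hp).mul h2).add ((h1.pow 2).const_mul (2 * a₁))).add
        (h1.const_mul (4 * a₂))).add_const (2 * a₃)
    exact H.congr_deriv (by simp only [hF3, hu, id_eq]; ring)
  have hD34 : ∀ p ∈ I, HasDerivAt F3 (F4 p) p := by
    intro p hp
    have h1 : HasDerivAt (d 1) (d 2 p) p := hD 1 p hp
    have h2 : HasDerivAt (d 2) (d 3 p) p := hD 2 p hp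
    have h3 : HasDerivAt (d 3) (d 4 p) p := hD 3 p hp
    have hv : HasDerivAt (fun q => 6 * (a₁ * d 1 q + a₂)) (6 * (a₁ * d 2 p)) p :=
      (((h1.const_mul a₁).add_const a₂).const_mul 6).congr_deriv (by ring)
    have H : HasDerivAt F3 _ p := ((hu' p hp).mul h3).add (hv.mul h2)
    exact H.congr_deriv (by simp only [hF4, hu, id_eq]; ring)
  have hD45 : ∀ p ∈ I, HasDerivAt F4 (F5 p) p := by
    intro p hp
    have h1 : HasDerivAt (d 1) (d 2 p) p := hD 1 p hp
    have h2 : HasDerivAt (d 2) (d 3 p) p := hD 2 p hp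
    have h3 : HasDerivAt (d 3) (d 4 p) p := hD 3 p hp
    have h4 : HasDerivAt (d 4) (d 5 p) p := hD 4 p hp
    have hv : HasDerivAt (fun q => 8 * (a₁ * d 1 q + a₂)) (8 * (a₁ * d 2 p)) p :=
      (((h1.const_mul a₁).add_const a₂).const_mul 8).congr_deriv (by ring)
    have H : HasDerivAt F4 _ p :=
      (((hu' p hp).mul h4).add (hv.mul h3)).add ((h2.pow 2).const_mul (6 * a₁))
    exact H.congr_deriv (by simp only [hF5, hu, id_eq]; ring)
  have h0 : ∀ p ∈ I, F0 p = 0 := by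
    intro p hp
    simp only [hF0, hd0]
    linear_combination hconic p hp
  have h1 : ∀ p ∈ I, F1 p = 0 := deriv_zero_of_eq_zero_on hI hD01 h0
  have h2 : ∀ p ∈ I, F2 p = 0 := deriv_zero_of_eq_zero_on hI hD12 h1
  have h3 : ∀ p ∈ I, F3 p = 0 := deriv_zero_of_eq_zero_on hI hD23 h2
  have h4 : ∀ p ∈ I, F4 p = 0 := deriv_zero_of_eq_zero_on hI hD34 h3
  have h5 : ∀ p ∈ I, F5 p = 0 := deriv_zero_of_eq_zero_on hI hD45 h4
  have key : ∀ p ∈ I, a₁ * iteratedDeriv 2 G p * monge G p = 0 := by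
    intro p hp
    have e3 := h3 p hp; have e4 := h4 p hp; have e5 := h5 p hp
    simp only [hF3, hF4, hF5, hu] at e3 e4 e5
    show a₁ * d 2 p * monge G p = 0
    have hM : monge G p = 40 * d 3 p ^ 3 - 45 * d 2 p * d 3 p * d 4 p
        + 9 * d 2 p ^ 2 * d 5 p := rfl
    rw [hM]
    linear_combination ((10 * d 4 p ^ 2 - 8 * d 3 p * d 5 p) * e3
      - (10 * d 3 p * d 4 p - 6 * d 2 p * d 5 p) * e4
      + (8 * d 3 p ^ 2 - 6 * d 2 p * d 4 p) * e5) / 4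
  refine ⟨key, fun ha₁ hg2 p hp => ?_⟩
  have hkey := key p hp
  have hM : monge G p = 0 := by
    rcases mul_eq_zero.mp hkey with h | h
    · rcases mul_eq_zero.mp h with h' | h'
      · exact absurd h' ha₁
      · exact absurd h' (hg2 p hp)
    · exact h
  simpa [monge] using hM
end

section
/- Let G be a smooth real-valued function on an open interval I ⊆ ℝ with G'' nowhere vanishing on I, and suppose the Monge expression vanishes identically: 40 G'''(p)³ − 45 G''(p) G'''(p) G''''(p) + 9 G''(p)² G'''''(p) = 0 for all p ∈ I. Then every point of I has an open neighborhood J ⊆ I on which the graph of G is contained in a conic: there exist real constants (a₁, a₂, a₃, a₄, a₅, a₆) ≠ (0,0,0,0,0,0) such that a₁ G(p)² + 2 a₂ p G(p) + a₃ p² + a₄ G(p) + a₅ p + a₆ = 0 for all p ∈ J. -/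
/-!
Write `h = G''` and `w = (h²)^(-1/3) = |h|^(-2/3)`. Differentiating `h² w³ = 1` three times gives
`27 h³ w''' = -2 w M(G)`, so the Monge equation forces `w` to be a positive quadratic `q`. Then
`s = h w²` satisfies `s² = q` and `G'' s³ = 1`, and since `q'² - 4 α q` is the discriminant `Δ` of
`q`, the function `Δ G + 4 s` is affine. If `Δ ≠ 0`, squaring gives the conic
`(Δ G - c₁ x - c₀)² = 16 q`; if `Δ = 0`, `s` is affine and `G'' = s⁻³` integrates to a parabola or
to a hyperbola with a vertical asymptote.
-/

open Set Filter Topology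
open scoped ContDiff

def GraphOnConic (f : ℝ → ℝ) (I : Set ℝ) : Prop :=
  ∃ a : Fin 6 → ℝ, a ≠ 0 ∧
    ∀ x ∈ I, a 0 * f x ^ 2 + 2 * a 1 * x * f x + a 2 * x ^ 2 + a 3 * f x + a 4 * x + a 5 = 0

section IteratedDeriv

variable {𝕜 F : Type*} [NontriviallyNormedField 𝕜] [NormedAddCommGroup F] [NormedSpace 𝕜 F]
  {f : 𝕜 → F} {x : 𝕜}

theorem iteratedDeriv_iteratedDeriv (m n : ℕ) :
    iteratedDeriv m (iteratedDeriv n f) = iteratedDeriv (m + n) f := by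
  simp only [iteratedDeriv_eq_iterate, Function.iterate_add_apply]

theorem ContDiffAt.iteratedDeriv_right {n m : ℕ∞ω} {i : ℕ} (hf : ContDiffAt 𝕜 n f x)
    (hmn : m + i ≤ n) : ContDiffAt 𝕜 m (iteratedDeriv i f) x := by
  rw [iteratedDeriv_eq_equiv_comp]
  exact (LinearIsometryEquiv.contDiff _).contDiffAt.comp x (hf.iteratedFDeriv_right hmn)

theorem ContDiffOn.hasDerivAt_iteratedDeriv {s : Set 𝕜} {n : ℕ∞ω} {m : ℕ}
    (hf : ContDiffOn 𝕜 n f s) (hs : IsOpen s) (hmn : (m : ℕ∞ω) < n) (hx : x ∈ s) :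
    HasDerivAt (iteratedDeriv m f) (iteratedDeriv (m + 1) f x) x := by
  rw [iteratedDeriv_succ]
  refine DifferentiableAt.hasDerivAt ?_
  simpa only [iteratedDeriv_eq_equiv_comp, LinearIsometryEquiv.comp_differentiableAt_iff]
    using (hf.contDiffAt (hs.mem_nhds hx)).differentiableAt_iteratedFDeriv hmn

theorem HasDerivAt.eq_zero_of_eventuallyEq_const {f' c : F} (hf : HasDerivAt f f' x)
    (hc : f =ᶠ[𝓝 x] fun _ => c) : f' = 0 :=
  hf.unique ((hasDerivAt_const x c).congr_of_eventuallyEq hc)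

end IteratedDeriv

theorem IsOpen.exists_is_const_of_hasDerivAt_zero {F : Type*} [NormedAddCommGroup F]
    [NormedSpace ℝ F] {f : ℝ → F} {s : Set ℝ} (hs : IsOpen s) (hs' : IsPreconnected s)
    (hf : ∀ x ∈ s, HasDerivAt f 0 x) : ∃ c, ∀ x ∈ s, f x = c :=
  hs.exists_is_const_of_deriv_eq_zero hs'
    (fun x hx => (hf x hx).differentiableAt.differentiableWithinAt) fun x hx => (hf x hx).deriv

theorem mul_rpow_neg_one_third_pow_three {a : ℝ} (ha : 0 < a) :
    a * (a ^ (-(1 / 3) : ℝ)) ^ 3 = 1 := by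
  rw [← Real.rpow_natCast, ← Real.rpow_mul ha.le]
  norm_num [Real.rpow_neg_one, ha.ne']

section Real

variable {I : Set ℝ} {f : ℝ → ℝ}

theorem mul_iteratedDeriv_three_sq_rpow_neg_one_third (hI : IsOpen I) (hf : ContDiffOn ℝ 3 f I)
    (hne : ∀ x ∈ I, f x ≠ 0) {x : ℝ} (hx : x ∈ I) :
    27 * f x ^ 3 * iteratedDeriv 3 (fun y => (f y ^ 2) ^ (-(1 / 3) : ℝ)) x =
      -2 * (f x ^ 2) ^ (-(1 / 3) : ℝ) * (40 * iteratedDeriv 1 f x ^ 3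
        - 45 * f x * iteratedDeriv 1 f x * iteratedDeriv 2 f x
        + 9 * f x ^ 2 * iteratedDeriv 3 f x) := by
  set w : ℝ → ℝ := fun y => (f y ^ 2) ^ (-(1 / 3) : ℝ)
  have hw : ContDiffOn ℝ 3 w I := (hf.pow 2).rpow_const_of_ne fun y hy => pow_ne_zero 2 (hne y hy)
  have df {k : ℕ} (hk : k < 3) {y : ℝ} (hy : y ∈ I) :=
    hf.hasDerivAt_iteratedDeriv hI (m := k) (by exact_mod_cast hk) hy
  have dw {k : ℕ} (hk : k < 3) {y : ℝ} (hy : y ∈ I) :=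
    hw.hasDerivAt_iteratedDeriv hI (m := k) (by exact_mod_cast hk) hy
  set f₁ := iteratedDeriv 1 f
  set f₂ := iteratedDeriv 2 f
  set f₃ := iteratedDeriv 3 f
  set w₁ := iteratedDeriv 1 w
  set w₂ := iteratedDeriv 2 w
  set w₃ := iteratedDeriv 3 w
  have df₀ {y} (hy : y ∈ I) : HasDerivAt f (f₁ y) y := by
    simpa only [iteratedDeriv_zero, zero_add] using df (k := 0) (by norm_num) hy
  have dw₀ {y} (hy : y ∈ I) : HasDerivAt w (w₁ y) y := by
    simpa only [iteratedDeriv_zero, zero_add] using dw (k := 0) (by norm_num) hy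
  have E₀ : ∀ y ∈ I, f y ^ 2 * w y ^ 3 = 1 := fun y hy =>
    mul_rpow_neg_one_third_pow_three (by have := hne y hy; positivity)
  have E₁ : ∀ y ∈ I, 2 * f₁ y * w y + 3 * f y * w₁ y = 0 := by
    intro y hy
    have hd := ((df₀ hy).fun_pow 2).fun_mul ((dw₀ hy).fun_pow 3)
    have hd₀ := hd.eq_zero_of_eventuallyEq_const (eventuallyEq_of_mem (hI.mem_nhds hy) E₀)
    have hwy : w y ≠ 0 := (Real.rpow_pos_of_pos (by have := hne y hy; positivity) _).ne'
    have : f y * w y ^ 2 * (2 * f₁ y * w y + 3 * f y * w₁ y) = 0 := by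
      simp only [Nat.cast_ofNat] at hd₀
      linear_combination hd₀
    simpa [hne y hy, hwy] using this
  have E₂ : ∀ y ∈ I, 2 * f₂ y * w y + 5 * f₁ y * w₁ y + 3 * f y * w₂ y = 0 := by
    intro y hy
    have hd := (((df (k := 1) (by norm_num) hy).const_mul 2).fun_mul (dw₀ hy)).fun_add
      (((df₀ hy).const_mul 3).fun_mul (dw (k := 1) (by norm_num) hy))
    linear_combination hd.eq_zero_of_eventuallyEq_const (eventuallyEq_of_mem (hI.mem_nhds hy) E₁)
  have E₃ : 2 * f₃ x * w x + 7 * f₂ x * w₁ x + 8 * f₁ x * w₂ x + 3 * f x * w₃ x = 0 := by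
    have hd := ((((df (k := 2) (by norm_num) hx).const_mul 2).fun_mul (dw₀ hx)).fun_add
      (((df (k := 1) (by norm_num) hx).const_mul 5).fun_mul
        (dw (k := 1) (by norm_num) hx))).fun_add
      (((df₀ hx).const_mul 3).fun_mul (dw (k := 2) (by norm_num) hx))
    linear_combination hd.eq_zero_of_eventuallyEq_const (eventuallyEq_of_mem (hI.mem_nhds hx) E₂)
  linear_combination 9 * f x ^ 2 * E₃ - 24 * f x * f₁ x * E₂ x hx
    + (40 * f₁ x ^ 2 - 21 * f x * f₂ x) * E₁ x hx

theorem exists_quadratic_of_iteratedDeriv_three_eq_zero (hI : IsOpen I) (hI' : IsPreconnected I)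
    (hf : ContDiffOn ℝ 3 f I) (hf₃ : ∀ x ∈ I, iteratedDeriv 3 f x = 0) :
    ∃ α β γ : ℝ, ∀ x ∈ I, f x = α * x ^ 2 + β * x + γ := by
  have df {k : ℕ} (hk : k < 3) {x : ℝ} (hx : x ∈ I) :=
    hf.hasDerivAt_iteratedDeriv hI (m := k) (by exact_mod_cast hk) hx
  obtain ⟨a, ha⟩ := hI.exists_is_const_of_hasDerivAt_zero hI' fun x hx =>
    (hf₃ x hx) ▸ df (k := 2) (by norm_num) hx
  obtain ⟨b, hb⟩ := hI.exists_is_const_of_hasDerivAt_zero hI' fun x hx =>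
    ((df (k := 1) (by norm_num) hx).fun_sub ((hasDerivAt_id' x).const_mul a)).congr_deriv
      (by rw [ha x hx, mul_one, sub_self])
  obtain ⟨c, hc⟩ := hI.exists_is_const_of_hasDerivAt_zero hI' fun x hx =>
    (((df (k := 0) (by norm_num) hx).fun_sub ((hasDerivAt_pow 2 x).const_mul (a / 2))).fun_sub
      ((hasDerivAt_id' x).const_mul b)).congr_deriv (by push_cast; linear_combination hb x hx)
  refine ⟨a / 2, b, c, fun x hx => ?_⟩
  have hcx := hc x hx
  rw [iteratedDeriv_zero] at hcx
  linear_combination hcx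

theorem exists_sq_eq_quadratic_of_monge_eq_zero {G : ℝ → ℝ} (hI : IsOpen I)
    (hI' : IsPreconnected I) (hG : ContDiffOn ℝ 5 G I)
    (hnd : ∀ x ∈ I, iteratedDeriv 2 G x ≠ 0) (hmonge : ∀ x ∈ I, monge G x = 0) :
    ∃ (s : ℝ → ℝ) (α β γ : ℝ), (∀ x ∈ I, DifferentiableAt ℝ s x) ∧
      ∀ x ∈ I, s x ^ 2 = α * x ^ 2 + β * x + γ ∧ iteratedDeriv 2 G x * s x ^ 3 = 1 := by
  set h := iteratedDeriv 2 G
  have hh : ContDiffOn ℝ 3 h I := fun x hx =>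
    ((hG.contDiffAt (hI.mem_nhds hx)).iteratedDeriv_right (by norm_num)).contDiffWithinAt
  set w : ℝ → ℝ := fun y => (h y ^ 2) ^ (-(1 / 3) : ℝ)
  have hw : ContDiffOn ℝ 3 w I := (hh.pow 2).rpow_const_of_ne fun y hy => pow_ne_zero 2 (hnd y hy)
  have hhw : ∀ x ∈ I, h x ^ 2 * w x ^ 3 = 1 := fun x hx =>
    mul_rpow_neg_one_third_pow_three (by have := hnd x hx; positivity)
  obtain ⟨α, β, γ, hq⟩ := exists_quadratic_of_iteratedDeriv_three_eq_zero hI hI' hw fun x hx => by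
    have key := mul_iteratedDeriv_three_sq_rpow_neg_one_third hI hh hnd hx
    simp only [h, iteratedDeriv_iteratedDeriv, Nat.reduceAdd] at key
    have hM := hmonge x hx
    rw [monge] at hM
    have h27 : 27 * h x ^ 3 ≠ 0 := by have := hnd x hx; positivity
    exact (mul_eq_zero.mp (key.trans (by rw [hM, mul_zero]))).resolve_left h27
  refine ⟨fun x => h x * w x ^ 2, α, β, γ, fun x hx => ?_, fun x hx => ⟨?_, ?_⟩⟩
  · have hx' := hI.mem_nhds hx
    exact ((hh.differentiableOn (by norm_num)).differentiableAt hx').fun_mul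
      (((hw.differentiableOn (by norm_num)).differentiableAt hx').fun_pow 2)
  · linear_combination w x * hhw x hx + hq x hx
  · linear_combination (h x ^ 2 * w x ^ 3 + 1) * hhw x hx

theorem graphOnConic_of_iteratedDeriv_two_mul_affine_cube (hI : IsOpen I)
    (hI' : IsPreconnected I) (hf : ContDiffOn ℝ 2 f I) {m n : ℝ}
    (hcube : ∀ x ∈ I, iteratedDeriv 2 f x * (m * x + n) ^ 3 = 1) : GraphOnConic f I := by
  have df : ∀ x ∈ I, HasDerivAt f (iteratedDeriv 1 f x) x := fun x hx => by
    simpa only [iteratedDeriv_zero, zero_add] using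
      hf.hasDerivAt_iteratedDeriv hI (m := 0) (by norm_num) hx
  have df' : ∀ x ∈ I, HasDerivAt (iteratedDeriv 1 f) (iteratedDeriv 2 f x) x := fun x hx =>
    hf.hasDerivAt_iteratedDeriv hI (m := 1) (by norm_num) hx
  have du (x : ℝ) : HasDerivAt (fun y => m * y + n) m x := by
    simpa using ((hasDerivAt_id' x).const_mul m).add_const n
  rcases eq_or_ne m 0 with rfl | hm
  · obtain ⟨b, hb⟩ := hI.exists_is_const_of_hasDerivAt_zero hI' fun x hx =>
      (((df' x hx).const_mul (n ^ 3)).fun_sub (hasDerivAt_id' x)).congr_deriv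
        (by linear_combination hcube x hx)
    obtain ⟨c, hc⟩ := hI.exists_is_const_of_hasDerivAt_zero hI' fun x hx =>
      ((((df x hx).const_mul (2 * n ^ 3)).fun_sub (hasDerivAt_pow 2 x)).fun_sub
        ((hasDerivAt_id' x).const_mul (2 * b))).congr_deriv
        (by push_cast; linear_combination 2 * hb x hx)
    refine ⟨![0, 0, -1, 2 * n ^ 3, -2 * b, -c], fun ha => by simpa using congrFun ha 2,
      fun x hx => ?_⟩
    simp only [Matrix.cons_val_zero, Matrix.cons_val_one, Matrix.cons_val]
    linear_combination hc x hx
  · have hu : ∀ x ∈ I, m * x + n ≠ 0 := fun x hx h0 => by simpa [h0] using hcube x hx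
    obtain ⟨b, hb⟩ := hI.exists_is_const_of_hasDerivAt_zero hI' fun x hx =>
      (((df' x hx).const_mul (2 * m)).fun_add
        (((du x).fun_pow 2).fun_inv (pow_ne_zero 2 (hu x hx)))).congr_deriv (by
          field_simp [hu x hx]
          linear_combination 2 * m * (m * x + n) * hcube x hx)
    obtain ⟨c, hc⟩ := hI.exists_is_const_of_hasDerivAt_zero hI' fun x hx =>
      ((((df x hx).const_mul (2 * m ^ 2)).fun_sub ((du x).fun_inv (hu x hx))).fun_sub
        ((hasDerivAt_id' x).const_mul (m * b))).congr_deriv (by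
          have hbx := hb x hx
          field_simp [hu x hx] at hbx ⊢
          linear_combination m * hbx)
    refine ⟨![0, m ^ 3, -(m ^ 2 * b), 2 * m ^ 2 * n, -(m * b * n) - c * m, -(c * n) - 1],
      fun ha => hm (by simpa using congrFun ha 1), fun x hx => ?_⟩
    have hcx := hc x hx
    field_simp [hu x hx] at hcx
    simp only [Matrix.cons_val_zero, Matrix.cons_val_one, Matrix.cons_val]
    linear_combination hcx

theorem exists_discrim_mul_add_four_mul_eq_affine (hI : IsOpen I) (hI' : IsPreconnected I)
    (hf : ContDiffOn ℝ 2 f I) {s : ℝ → ℝ} {α β γ : ℝ} (hs : ∀ x ∈ I, DifferentiableAt ℝ s x)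
    (hsq : ∀ x ∈ I, s x ^ 2 = α * x ^ 2 + β * x + γ)
    (hcube : ∀ x ∈ I, iteratedDeriv 2 f x * s x ^ 3 = 1) :
    ∃ c₁ c₀ : ℝ, ∀ x ∈ I, discrim α β γ * f x + 4 * s x = c₁ * x + c₀ := by
  have df : ∀ x ∈ I, HasDerivAt f (iteratedDeriv 1 f x) x := fun x hx => by
    simpa only [iteratedDeriv_zero, zero_add] using
      hf.hasDerivAt_iteratedDeriv hI (m := 0) (by norm_num) hx
  have df' : ∀ x ∈ I, HasDerivAt (iteratedDeriv 1 f) (iteratedDeriv 2 f x) x := fun x hx =>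
    hf.hasDerivAt_iteratedDeriv hI (m := 1) (by norm_num) hx
  have ds : ∀ x ∈ I, HasDerivAt s (deriv s x) x := fun x hx => (hs x hx).hasDerivAt
  have hs₀ : ∀ x ∈ I, s x ≠ 0 := fun x hx h0 => by simpa [h0] using hcube x hx
  have dq (x : ℝ) : HasDerivAt (fun y => α * y ^ 2 + β * y + γ) (2 * α * x + β) x :=
    ((((hasDerivAt_pow 2 x).const_mul α).fun_add ((hasDerivAt_id' x).const_mul β)).add_const
      γ).congr_deriv (by push_cast; ring)
  have dq' (x : ℝ) : HasDerivAt (fun y => 2 * α * y + β) (2 * α) x := by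
    simpa using ((hasDerivAt_id' x).const_mul (2 * α)).add_const β
  have hss' : ∀ x ∈ I, 2 * s x * deriv s x = 2 * α * x + β := fun x hx => by
    have := (((ds x hx).fun_pow 2).fun_sub (dq x)).eq_zero_of_eventuallyEq_const (c := 0)
      (eventuallyEq_of_mem (hI.mem_nhds hx) fun y hy => sub_eq_zero.mpr (hsq y hy))
    linear_combination this
  obtain ⟨c₁, hc₁⟩ := hI.exists_is_const_of_hasDerivAt_zero hI' fun x hx =>
    (((df' x hx).const_mul (discrim α β γ)).fun_add
      (((dq' x).const_mul 2).fun_div (ds x hx) (hs₀ x hx))).congr_deriv (by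
        rw [eq_inv_of_mul_eq_one_left (hcube x hx), discrim]
        field_simp [hs₀ x hx]
        linear_combination 4 * α * hsq x hx - (2 * α * x + β) * hss' x hx)
  obtain ⟨c₀, hc₀⟩ := hI.exists_is_const_of_hasDerivAt_zero hI' fun x hx =>
    ((((df x hx).const_mul (discrim α β γ)).fun_add ((ds x hx).const_mul 4)).fun_sub
      ((hasDerivAt_id' x).const_mul c₁)).congr_deriv (by
        have h₄ : 4 * deriv s x = 2 * (2 * α * x + β) / s x := by
          field_simp [hs₀ x hx]
          linear_combination 2 * hss' x hx
        linear_combination hc₁ x hx + h₄)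
  exact ⟨c₁, c₀, fun x hx => by linear_combination hc₀ x hx⟩

theorem graphOnConic_of_iteratedDeriv_two_mul_cube (hI : IsOpen I) (hI' : IsPreconnected I)
    (hf : ContDiffOn ℝ 2 f I) {s : ℝ → ℝ} {α β γ : ℝ} (hs : ∀ x ∈ I, DifferentiableAt ℝ s x)
    (hsq : ∀ x ∈ I, s x ^ 2 = α * x ^ 2 + β * x + γ)
    (hcube : ∀ x ∈ I, iteratedDeriv 2 f x * s x ^ 3 = 1) : GraphOnConic f I := by
  obtain ⟨c₁, c₀, hc⟩ := exists_discrim_mul_add_four_mul_eq_affine hI hI' hf hs hsq hcube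
  set Δ := discrim α β γ
  by_cases hΔ : Δ = 0
  · refine graphOnConic_of_iteratedDeriv_two_mul_affine_cube hI hI' hf (m := c₁ / 4)
      (n := c₀ / 4) fun x hx => ?_
    have hs' : s x = c₁ / 4 * x + c₀ / 4 := by linear_combination (hc x hx - f x * hΔ) / 4
    rw [← hs']
    exact hcube x hx
  · refine ⟨![Δ ^ 2, -(Δ * c₁), c₁ ^ 2 - 16 * α, -(2 * Δ * c₀), 2 * c₁ * c₀ - 16 * β,
      c₀ ^ 2 - 16 * γ], fun ha => hΔ (by simpa using congrFun ha 0), fun x hx => ?_⟩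
    simp only [Matrix.cons_val_zero, Matrix.cons_val_one, Matrix.cons_val]
    linear_combination (Δ * f x - c₁ * x - c₀ - 4 * s x) * hc x hx + 16 * hsq x hx

end Real

/-- If `G` is smooth with nowhere vanishing `G''` on an open interval and the
Monge expression of `G` vanishes identically, then locally near each point the graph of `G` is
contained in a (nontrivial) conic. -/
theorem monge_implies_conic
    (I : Set ℝ) (hI : IsOpen I) (hI' : Convex ℝ I)
    (G : ℝ → ℝ) (hG : ContDiffOn ℝ (⊤ : ℕ∞) G I)
    (hnd : ∀ p ∈ I, iteratedDeriv 2 G p ≠ 0)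
    (hmonge : ∀ p ∈ I, 40 * (iteratedDeriv 3 G p) ^ 3
      - 45 * iteratedDeriv 2 G p * iteratedDeriv 3 G p * iteratedDeriv 4 G p
      + 9 * (iteratedDeriv 2 G p) ^ 2 * iteratedDeriv 5 G p = 0) :
    ∀ p₀ ∈ I, ∃ J : Set ℝ, IsOpen J ∧ p₀ ∈ J ∧ J ⊆ I ∧
      ∃ a : Fin 6 → ℝ, a ≠ 0 ∧
        ∀ p ∈ J, a 0 * G p ^ 2 + 2 * a 1 * p * G p + a 2 * p ^ 2
          + a 3 * G p + a 4 * p + a 5 = 0 := by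
  intro p₀ hp₀
  have hsmooth {n : ℕ} : ContDiffOn ℝ n G I := hG.of_le (WithTop.coe_le_coe.mpr le_top)
  obtain ⟨s, α, β, γ, hs, hsq⟩ :=
    exists_sq_eq_quadratic_of_monge_eq_zero hI hI'.isPreconnected hsmooth hnd hmonge
  exact ⟨I, hI, hp₀, subset_rfl, graphOnConic_of_iteratedDeriv_two_mul_cube hI hI'.isPreconnected
    hsmooth hs (fun x hx => (hsq x hx).1) fun x hx => (hsq x hx).2⟩
end

section
/- Let f be a smooth real-valued function on an open interval I ⊆ ℝ with f'' nowhere vanishing. On the open set Ω = {(x,y,z,p,r) ∈ ℝ⁵ : p ∈ I}, define G(x,y,z,p,r) = f(p) and H(x,y,z,p,r) = −r² f'''(p)/f''(p). Then the complete integrability condition Δ H = D³ G holds identically on Ω. -/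
/-!
Every function occurring in the computation has the form `r ^ k * g(p)`. When `H = r² h(p)`,
the total derivative maps `r ^ k g(p)` to `r ^ (k + 1) (g' + k h g)(p)`, so
`D G = r f'`, `D² G = r² g₂` and `D³ G = r³ (g₂' + 2 h g₂)` with `g₂ = f'' + h f'`, while
`Δ H = (D G) H_p + (D² G) H_r = r³ (f' h' + 2 h g₂)`. For `h = -f'''/f''` one has `h f'' = -f'''`,
hence `g₂' = f''' + h' f' + h f'' = h' f'`, and the two sides agree.
-/

theorem ContDiffOn.differentiableOn_iteratedDeriv_of_isOpen {𝕜 F : Type*}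
    [NontriviallyNormedField 𝕜] [NormedAddCommGroup F] [NormedSpace 𝕜 F] {f : 𝕜 → F}
    {s : Set 𝕜} (hf : ContDiffOn 𝕜 (⊤ : ℕ∞) f s) (hs : IsOpen s) (n : ℕ) :
    DifferentiableOn 𝕜 (iteratedDeriv n f) s :=
  (hf.differentiableOn_iteratedDerivWithin (by exact_mod_cast ENat.natCast_lt_top n)
    hs.uniqueDiffOn).congr (iteratedDerivWithin_of_isOpen hs).symm

theorem hasDerivAt_add_mul_of_mul_eq_neg {a b c h : ℝ → ℝ} {p h' : ℝ}
    (ha : HasDerivAt a (b p) p) (hb : HasDerivAt b (c p) p) (hh : HasDerivAt h h' p)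
    (hcancel : h p * b p = -c p) :
    HasDerivAt (fun q => b q + h q * a q) (h' * a p) p :=
  (hb.fun_add (hh.fun_mul ha)).congr_deriv (by linear_combination hcancel)

def rPowMul (k : ℕ) (g : ℝ → ℝ) : (Fin 5 → ℝ) → ℝ :=
  fun w => w 4 ^ k * g (w 3)

section rPowMul

variable {k : ℕ} {g h : ℝ → ℝ} {w : Fin 5 → ℝ}

theorem pd_rPowMul (i : Fin 5) (hg : DifferentiableAt ℝ g (w 3)) :
    pd i (rPowMul k g) w =
      k * w 4 ^ (k - 1) * (Pi.single i 1 : Fin 5 → ℝ) 4 * g (w 3)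
        + w 4 ^ k * (deriv g (w 3) * (Pi.single i 1 : Fin 5 → ℝ) 3) := by
  have hr : HasFDerivAt (fun w : Fin 5 → ℝ => w 4 ^ k)
      ((k * w 4 ^ (k - 1)) • ContinuousLinearMap.proj (R := ℝ) 4) w :=
    (hasDerivAt_pow k (w 4)).comp_hasFDerivAt w (hasFDerivAt_apply 4 w)
  have hp : HasFDerivAt (fun w : Fin 5 → ℝ => g (w 3))
      (deriv g (w 3) • ContinuousLinearMap.proj (R := ℝ) 3) w :=
    hg.hasDerivAt.comp_hasFDerivAt w (hasFDerivAt_apply 3 w)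
  unfold pd rPowMul
  rw [(hr.fun_mul hp).fderiv]
  simp only [add_apply, FunLike.coe_smul, Pi.smul_apply, ContinuousLinearMap.proj_apply,
    smul_eq_mul]
  ring

theorem Dop_rPowMul (hg : DifferentiableAt ℝ g (w 3)) :
    Dop (rPowMul 2 h) (rPowMul k g) w = rPowMul (k + 1) (fun p => deriv g p + k * h p * g p) w := by
  simp only [Dop, pd_rPowMul _ hg, rPowMul, Pi.single_apply]
  cases k <;> simp; ring

theorem eqOn_Dop_rPowMul {U : Set ℝ} {g' : ℝ → ℝ} (hg : DifferentiableOn ℝ g U) (hU : IsOpen U)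
    (hg' : Set.EqOn g' (fun p => deriv g p + k * h p * g p) U) :
    Set.EqOn (Dop (rPowMul 2 h) (rPowMul k g)) (rPowMul (k + 1) g') {w | w 3 ∈ U} := by
  intro w hw
  rw [Dop_rPowMul (hg.differentiableAt (hU.mem_nhds hw)), rPowMul, rPowMul, hg' hw]

theorem Delta_rPowMul {G H : (Fin 5 → ℝ) → ℝ} (hg : DifferentiableAt ℝ g (w 3)) :
    Delta G H (rPowMul k g) w =
      Dop H G w * (w 4 ^ k * deriv g (w 3)) + Dop H (Dop H G) w * (k * w 4 ^ (k - 1) * g (w 3)) := by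
  simp [Delta, pd_rPowMul _ hg]

end rPowMul

theorem Dop_congr_of_eqOn {H F F' : (Fin 5 → ℝ) → ℝ} {s : Set (Fin 5 → ℝ)} {w : Fin 5 → ℝ}
    (hs : IsOpen s) (hF : Set.EqOn F F' s) (hw : w ∈ s) : Dop H F w = Dop H F' w := by
  simp only [Dop, pd, (hF.eventuallyEq_of_mem (hs.mem_nhds hw)).fderiv_eq]

theorem example_is_integrable_general
    (I : Set ℝ) (hI : IsOpen I)
    (f : ℝ → ℝ) (hf : ContDiffOn ℝ (⊤ : ℕ∞) f I)
    (hnd : ∀ p ∈ I, iteratedDeriv 2 f p ≠ 0) :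
    ∀ v : Fin 5 → ℝ, v 3 ∈ I →
      Delta (fun v => f (v 3))
            (fun v => -(v 4) ^ 2 * iteratedDeriv 3 f (v 3) / iteratedDeriv 2 f (v 3))
            (fun v => -(v 4) ^ 2 * iteratedDeriv 3 f (v 3) / iteratedDeriv 2 f (v 3)) v =
      Dop (fun v => -(v 4) ^ 2 * iteratedDeriv 3 f (v 3) / iteratedDeriv 2 f (v 3))
        (Dop (fun v => -(v 4) ^ 2 * iteratedDeriv 3 f (v 3) / iteratedDeriv 2 f (v 3))
          (Dop (fun v => -(v 4) ^ 2 * iteratedDeriv 3 f (v 3) / iteratedDeriv 2 f (v 3))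
            (fun v => f (v 3)))) v := by
  intro v hv
  set h := fun p => -(iteratedDeriv 3 f p / iteratedDeriv 2 f p)
  set g₂ := fun p => iteratedDeriv 2 f p + h p * deriv f p
  have hH : (fun v : Fin 5 → ℝ => -(v 4) ^ 2 * iteratedDeriv 3 f (v 3) / iteratedDeriv 2 f (v 3))
      = rPowMul 2 h := by
    funext w; simp only [rPowMul, h]; ring
  have hG : (fun v : Fin 5 → ℝ => f (v 3)) = rPowMul 0 f := by
    funext w; simp [rPowMul]
  rw [hH, hG]
  have hd := hf.differentiableOn_iteratedDeriv_of_isOpen hI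
  have hΩ : IsOpen {w : Fin 5 → ℝ | w 3 ∈ I} := hI.preimage (continuous_apply 3)
  have hDG : Set.EqOn (Dop (rPowMul 2 h) (rPowMul 0 f)) (rPowMul 1 (deriv f)) {w | w 3 ∈ I} :=
    eqOn_Dop_rPowMul (by simpa using hd 0) hI (fun p _ => by simp)
  have hD2G : Set.EqOn (Dop (rPowMul 2 h) (Dop (rPowMul 2 h) (rPowMul 0 f))) (rPowMul 2 g₂)
      {w | w 3 ∈ I} := fun w hw =>
    (Dop_congr_of_eqOn hΩ hDG hw).trans <| eqOn_Dop_rPowMul (by simpa using hd 1) hI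
      (fun p _ => by simp [g₂, iteratedDeriv_succ]) hw
  have hf' (n : ℕ) : HasDerivAt (iteratedDeriv n f) (iteratedDeriv (n + 1) f (v 3)) (v 3) := by
    rw [iteratedDeriv_succ]
    exact ((hd n).differentiableAt (hI.mem_nhds hv)).hasDerivAt
  have hh : HasDerivAt h (deriv h (v 3)) (v 3) :=
    (((hd 3).div (hd 2) hnd).neg.differentiableAt (hI.mem_nhds hv)).hasDerivAt
  have hg₂ : HasDerivAt g₂ (deriv h (v 3) * deriv f (v 3)) (v 3) :=
    hasDerivAt_add_mul_of_mul_eq_neg (by simpa using hf' 1) (hf' 2) hh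
      (by simp only [h]; field_simp [hnd _ hv])
  rw [Delta_rPowMul hh.differentiableAt, hDG hv, hD2G hv, Dop_congr_of_eqOn hΩ hD2G hv,
    Dop_rPowMul hg₂.differentiableAt]
  simp only [rPowMul, hg₂.deriv]
  push_cast
  ring

/-- For `G = f(p)` and `H = −r² f'''(p)/f''(p)` (with `f''` nonvanishing),
the complete integrability condition `Δ H = D³ G` holds identically on
`Ω = {(x,y,z,p,r) : p ∈ I}`. -/
theorem example_is_integrable
    (I : Set ℝ) (hI : IsOpen I) (hI' : Convex ℝ I)
    (f : ℝ → ℝ) (hf : ContDiffOn ℝ (⊤ : ℕ∞) f I)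
    (hnd : ∀ p ∈ I, iteratedDeriv 2 f p ≠ 0) :
    ∀ v : Fin 5 → ℝ, v 3 ∈ I →
      Delta (fun v => f (v 3))
            (fun v => -(v 4) ^ 2 * iteratedDeriv 3 f (v 3) / iteratedDeriv 2 f (v 3))
            (fun v => -(v 4) ^ 2 * iteratedDeriv 3 f (v 3) / iteratedDeriv 2 f (v 3)) v =
      Dop (fun v => -(v 4) ^ 2 * iteratedDeriv 3 f (v 3) / iteratedDeriv 2 f (v 3))
        (Dop (fun v => -(v 4) ^ 2 * iteratedDeriv 3 f (v 3) / iteratedDeriv 2 f (v 3))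
          (Dop (fun v => -(v 4) ^ 2 * iteratedDeriv 3 f (v 3) / iteratedDeriv 2 f (v 3))
            (fun v => f (v 3)))) v :=
  example_is_integrable_general I hI f hf hnd
end

section
/- Let f be a smooth real-valued function on an open interval I ⊆ ℝ with f'' nowhere vanishing. On the open set Ω = {(X,Y,P,Q,q) ∈ ℝ⁵ : X ∈ I, q ≠ Q}, define the change of coordinates x = −P + q f'(X)/f''(X), y = −q/f''(X), z = Y − P X + q (X f'(X) − f(X))/f''(X), p = X, r = 1/(q − Q). Then the 1-form dz − p dx − f(p) dy equals dY − P dX on Ω; explicitly, for each coordinate u ∈ {X, Y, P, Q, q}: ∂z/∂u − p · ∂x/∂u − f(p) · ∂y/∂u equals −P when u = X, equals 1 when u = Y, and equals 0 when u = P, u = Q, or u = q. -/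
/-! With `g = f'/f''` and `k = -1/f''` the new coordinates read `x = -P + q g(X)`,
`y = q k(X)`, `z = Y - PX + q h(X)` where `h = X g + f k`. Pulling back `dz - p dx - f(p) dy`,
the `dq`-coefficient is `h - X g - f k = 0`, and the `dX`-coefficient is
`-P + q (h' - X g' - f k') = -P + q (g + f' k) = -P`. -/

open ContinuousLinearMap

lemma HasDerivAt.hasFDerivAt_apply_mul_comp_apply {ι : Type*} [Fintype ι] {φ : ℝ → ℝ}
    {φ' : ℝ} {v : ι → ℝ} {i : ι} (hφ : HasDerivAt φ φ' (v i)) (j : ι) :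
    HasFDerivAt (fun w : ι → ℝ => w j * φ (w i))
      (v j • φ' • (proj i : (ι → ℝ) →L[ℝ] ℝ) + φ (v i) • proj j) v :=
  (hasFDerivAt_apply j v).mul (hφ.comp_hasFDerivAt v (hasFDerivAt_apply i v))

theorem contactForm_pullback_eq {f g k : ℝ → ℝ} {f' g' k' : ℝ} {v : Fin 5 → ℝ}
    (hf : HasDerivAt f f' (v 0)) (hg : HasDerivAt g g' (v 0)) (hk : HasDerivAt k k' (v 0))
    (hgk : g (v 0) + f' * k (v 0) = 0) :
    fderiv ℝ (fun w => w 1 - w 2 * w 0 + w 4 * (w 0 * g (w 0) + f (w 0) * k (w 0))) v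
      - v 0 • fderiv ℝ (fun w => -w 2 + w 4 * g (w 0)) v
      - f (v 0) • fderiv ℝ (fun w => w 4 * k (w 0)) v
      = proj 1 - v 2 • proj 0 := by
  have hh : HasDerivAt (fun s => s * g s + f s * k s) _ (v 0) :=
    ((hasDerivAt_id (v 0)).mul hg).add (hf.mul hk)
  have hz : HasFDerivAt (fun w => w 1 - w 2 * w 0 + w 4 * (w 0 * g (w 0) + f (w 0) * k (w 0)))
      _ v := ((hasFDerivAt_apply 1 v).sub
    ((hasDerivAt_id (v 0)).hasFDerivAt_apply_mul_comp_apply 2)).add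
    (hh.hasFDerivAt_apply_mul_comp_apply 4)
  have hx : HasFDerivAt (fun w => -w 2 + w 4 * g (w 0)) _ v :=
    (hasFDerivAt_apply 2 v).neg.add (hg.hasFDerivAt_apply_mul_comp_apply 4)
  rw [hz.fderiv, hx.fderiv, (hk.hasFDerivAt_apply_mul_comp_apply 4).fderiv]
  ext w
  simp only [one_smul, id_eq, one_mul, smul_add, smul_neg, sub_apply, add_apply, proj_apply,
    smul_apply, smul_eq_mul, neg_apply]
  linear_combination (v 4 * w 0) * hgk

theorem contact_form_in_new_coordinates_general
    (I : Set ℝ) (hI : IsOpen I)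
    (f : ℝ → ℝ) (hf : ContDiffOn ℝ (⊤ : ℕ∞) f I)
    (hnd : ∀ x ∈ I, iteratedDeriv 2 f x ≠ 0)
    (x y z p : (Fin 5 → ℝ) → ℝ)
    (hx : x = fun v => -(v 2) + v 4 * deriv f (v 0) / iteratedDeriv 2 f (v 0))
    (hy : y = fun v => -(v 4) / iteratedDeriv 2 f (v 0))
    (hz : z = fun v => v 1 - v 2 * v 0
      + v 4 * (v 0 * deriv f (v 0) - f (v 0)) / iteratedDeriv 2 f (v 0))
    (hp : p = fun v => v 0) :
    ∀ v : Fin 5 → ℝ, v 0 ∈ I → v 4 ≠ v 3 →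
      (pd 0 z v - p v * pd 0 x v - f (p v) * pd 0 y v = -(v 2)) ∧
      (pd 1 z v - p v * pd 1 x v - f (p v) * pd 1 y v = 1) ∧
      (pd 2 z v - p v * pd 2 x v - f (p v) * pd 2 y v = 0) ∧
      (pd 3 z v - p v * pd 3 x v - f (p v) * pd 3 y v = 0) ∧
      (pd 4 z v - p v * pd 4 x v - f (p v) * pd 4 y v = 0) := by
  intro v hX _
  have h2 : iteratedDeriv 2 f = deriv (deriv f) := by rw [iteratedDeriv_succ, iteratedDeriv_one]
  set g : ℝ → ℝ := fun s => deriv f s / deriv (deriv f) s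
  set k : ℝ → ℝ := fun s => -(deriv (deriv f) s)⁻¹
  have hx' : x = fun w => -w 2 + w 4 * g (w 0) := by rw [hx, h2]; funext w; ring
  have hy' : y = fun w => w 4 * k (w 0) := by rw [hy, h2]; funext w; ring
  have hz' : z = fun w => w 1 - w 2 * w 0 + w 4 * (w 0 * g (w 0) + f (w 0) * k (w 0)) := by
    rw [hz, h2]; funext w; ring
  have hU := hI.mem_nhds hX
  have hf1 := hf.deriv_of_isOpen hI (m := 2) (by norm_cast)
  have hf2 := hf1.deriv_of_isOpen hI (m := 1) (by norm_num)
  have hc : deriv (deriv f) (v 0) ≠ 0 := h2 ▸ hnd _ hX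
  have hd0 := (hf.differentiableOn (by simp)).differentiableAt hU
  have hd1 := (hf1.differentiableOn (by simp)).differentiableAt hU
  have hd2 := (hf2.differentiableOn (by simp)).differentiableAt hU
  have hω := contactForm_pullback_eq hd0.hasDerivAt (hd1.div hd2 hc).hasDerivAt
    (hd2.inv hc).neg.hasDerivAt (g := g) (k := k) (by simp only [g, k]; ring)
  rw [← hx', ← hy', ← hz'] at hω
  have hpd (i : Fin 5) : pd i z v - p v * pd i x v - f (p v) * pd i y v
      = (proj 1 - v 2 • proj 0 : (Fin 5 → ℝ) →L[ℝ] ℝ) (Pi.single i 1) := by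
    rw [← hω, hp]; rfl
  simp [hpd]

/-- Under the coordinate change
`x = −P + q f'(X)/f''(X)`, `y = −q/f''(X)`, `z = Y − PX + q(Xf'(X) − f(X))/f''(X)`, `p = X`,
the contact form `dz − p dx − f(p) dy` equals `dY − P dX` on
`Ω = {(X,Y,P,Q,q) : X ∈ I, q ≠ Q}`: its component in each coordinate direction
`X, Y, P, Q, q` is `−P, 1, 0, 0, 0` respectively. -/
theorem contact_form_in_new_coordinates
    (I : Set ℝ) (hI : IsOpen I) (hI' : Convex ℝ I)
    (f : ℝ → ℝ) (hf : ContDiffOn ℝ (⊤ : ℕ∞) f I)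
    (hnd : ∀ x ∈ I, iteratedDeriv 2 f x ≠ 0)
    (x y z p : (Fin 5 → ℝ) → ℝ)
    (hx : x = fun v => -(v 2) + v 4 * deriv f (v 0) / iteratedDeriv 2 f (v 0))
    (hy : y = fun v => -(v 4) / iteratedDeriv 2 f (v 0))
    (hz : z = fun v => v 1 - v 2 * v 0
      + v 4 * (v 0 * deriv f (v 0) - f (v 0)) / iteratedDeriv 2 f (v 0))
    (hp : p = fun v => v 0) :
    ∀ v : Fin 5 → ℝ, v 0 ∈ I → v 4 ≠ v 3 →
      (pd 0 z v - p v * pd 0 x v - f (p v) * pd 0 y v = -(v 2)) ∧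
      (pd 1 z v - p v * pd 1 x v - f (p v) * pd 1 y v = 1) ∧
      (pd 2 z v - p v * pd 2 x v - f (p v) * pd 2 y v = 0) ∧
      (pd 3 z v - p v * pd 3 x v - f (p v) * pd 3 y v = 0) ∧
      (pd 4 z v - p v * pd 4 x v - f (p v) * pd 4 y v = 0) :=
  contact_form_in_new_coordinates_general I hI f hf hnd x y z p hx hy hz hp
end
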